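/- Sturm nonvanishing consequence: suppose u > 0 solves u'' + ((n−1)/r)u' + f(u) = 0 on (0,1) with u(1) = 0, f is C¹ with f > 0 and u·f'(u) > f(u) for all u > 0, and w solves the linearized equation w'' + ((n−1)/r)w' + f'(u)w = 0 on (0,1) with w'(0) = w(1) = 0, w not identically zero. If w > 0 on [0,1), then a contradiction follows; hence the linearized problem has only the trivial solution whenever every nontrivial solution of the linearized problem is known to be positive on [0,1). -/

import Mathlib

/-!
Suppose `w` had no zero in `(0,1)`; then `w > 0` there. The radial Wronskian
`W(r) = r^(n-1) (u' w - u w')` of `u` and `w` vanishes at `r = 0` (as `u'(0) = w'(0) = 0`) and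
at `r = 1` (as `u(1) = w(1) = 0`), but `W' = r^(n-1) w (u f'(u) - f(u)) > 0` on `(0,1)`,
so `W` is strictly increasing on `[0,1]`: a contradiction.
-/

open Set

lemma pos_of_forall_ne_zero_of_left_pos {w : ℝ → ℝ} {a b : ℝ}
    (hw : ContinuousOn w (Icc a b)) (ha : 0 < w a) (hne : ∀ r ∈ Ioo a b, w r ≠ 0) :
    ∀ r ∈ Ioo a b, 0 < w r := by
  intro r hr
  by_contra! hr_nonpos
  obtain ⟨c, hc, hc0⟩ := intermediate_value_Ioc' hr.1.le
    (hw.mono (Icc_subset_Icc le_rfl hr.2.le)) ⟨hr_nonpos, ha⟩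
  exact hne c ⟨hc.1, hc.2.trans_lt hr.2⟩ hc0

lemma hasDerivAt_pow_div {r : ℝ} (hr : r ≠ 0) (m : ℕ) :
    HasDerivAt (fun x : ℝ => x ^ m) ((m : ℝ) / r * r ^ m) r := by
  refine (hasDerivAt_pow m r).congr_deriv ?_
  cases m with
  | zero => simp
  | succ k => rw [pow_succ]; field_simp; simp

/-- The weight `r ^ m` is the integrating factor of `y'' + (m/r) y'`, which removes the
first-order terms from the derivative of the Wronskian. -/
def radialWronskian (m : ℕ) (u u' w w' : ℝ → ℝ) (r : ℝ) : ℝ :=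
  r ^ m * (u' r * w r - u r * w' r)

lemma hasDerivAt_radialWronskian (m : ℕ) {u u' u'' w w' w'' : ℝ → ℝ} {r : ℝ}
    (hr : r ≠ 0) (hu : HasDerivAt u (u' r) r) (hu' : HasDerivAt u' (u'' r) r)
    (hw : HasDerivAt w (w' r) r) (hw' : HasDerivAt w' (w'' r) r) :
    HasDerivAt (radialWronskian m u u' w w')
      (r ^ m * ((u'' r + m / r * u' r) * w r - u r * (w'' r + m / r * w' r))) r :=
  ((hasDerivAt_pow_div hr m).mul ((hu'.mul hw).sub (hu.mul hw'))).congr_deriv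
    (by simp only [Pi.sub_apply, Pi.mul_apply]; ring)

lemma continuousAt_radialWronskian (m : ℕ) {u u' w w' : ℝ → ℝ} {r : ℝ}
    (hu : ContinuousAt u r) (hu' : ContinuousAt u' r)
    (hw : ContinuousAt w r) (hw' : ContinuousAt w' r) :
    ContinuousAt (radialWronskian m u u' w w') r :=
  (continuousAt_pow r m).mul ((hu'.mul hw).sub (hu.mul hw'))

/-- Sturm comparison consequence: if `u > 0` solves `u'' + ((n-1)/r) u' + f(u) = 0` on
`(0,1)` with `u(1) = 0`, where `f > 0` and `u f'(u) > f(u)` for `u > 0`, then any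
solution `w` of the linearized equation with `w'(0) = 0`, `w(0) > 0`, `w(1) = 0`
must vanish somewhere in `(0,1)`. -/
theorem stmt14 (n : ℕ) (hn : 1 ≤ n) (f f' : ℝ → ℝ)
    (hf : ∀ x > (0:ℝ), HasDerivAt f (f' x) x ∧ 0 < f x ∧ f x < x * f' x)
    (u u' u'' : ℝ → ℝ)
    (hu : ∀ r ∈ Set.Icc (0:ℝ) 1, HasDerivAt u (u' r) r)
    (hu' : ∀ r ∈ Set.Icc (0:ℝ) 1, HasDerivAt u' (u'' r) r)
    (hupos : ∀ r ∈ Set.Ico (0:ℝ) 1, 0 < u r)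
    (hueq : ∀ r ∈ Set.Ioo (0:ℝ) 1, u'' r + ((n : ℝ) - 1) / r * u' r + f (u r) = 0)
    (hu'0 : u' 0 = 0) (hu1 : u 1 = 0)
    (w w' w'' : ℝ → ℝ)
    (hwd : ∀ r ∈ Set.Icc (0:ℝ) 1, HasDerivAt w (w' r) r)
    (hwd' : ∀ r ∈ Set.Icc (0:ℝ) 1, HasDerivAt w' (w'' r) r)
    (hweq : ∀ r ∈ Set.Ioo (0:ℝ) 1,
      w'' r + ((n : ℝ) - 1) / r * w' r + f' (u r) * w r = 0)
    (hw'0 : w' 0 = 0) (hw1 : w 1 = 0) (hw0 : 0 < w 0) :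
    ∃ ρ ∈ Set.Ioo (0:ℝ) 1, w ρ = 0 := by
  by_contra! hne
  have hwpos := pos_of_forall_ne_zero_of_left_pos
    (fun r hr => (hwd r hr).continuousAt.continuousWithinAt) hw0 hne
  set W := radialWronskian (n - 1) u u' w w'
  have hcast : ((n - 1 : ℕ) : ℝ) = n - 1 := by rw [Nat.cast_sub hn, Nat.cast_one]
  have hW_deriv_pos : ∀ r ∈ Ioo (0:ℝ) 1, 0 < deriv W r := by
    intro r hr
    have hr' : r ∈ Icc (0:ℝ) 1 := Ioo_subset_Icc_self hr
    rw [(hasDerivAt_radialWronskian (n - 1) hr.1.ne' (hu r hr') (hu' r hr')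
      (hwd r hr') (hwd' r hr')).deriv, hcast,
      eq_neg_of_add_eq_zero_left (hueq r hr), eq_neg_of_add_eq_zero_left (hweq r hr)]
    have hsuperlinear := (hf (u r) (hupos r (Ioo_subset_Ico_self hr))).2.2
    have := mul_pos (pow_pos hr.1 (n - 1)) (mul_pos (hwpos r hr) (sub_pos.2 hsuperlinear))
    linarith
  have hW_mono : StrictMonoOn W (Icc 0 1) :=
    strictMonoOn_of_deriv_pos (convex_Icc 0 1)
      (fun r hr => (continuousAt_radialWronskian _ (hu r hr).continuousAt (hu' r hr).continuousAt
        (hwd r hr).continuousAt (hwd' r hr).continuousAt).continuousWithinAt)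
      (by rwa [interior_Icc])
  have h01 := hW_mono (left_mem_Icc.2 zero_le_one) (right_mem_Icc.2 zero_le_one) zero_lt_one
  simp [W, radialWronskian, hu'0, hw'0, hu1, hw1] at h01
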